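/- arXiv:1709.01345 — 8 statements merged into one kernel-verified Lean document; each statement's English description precedes it below -/
import Mathlib

section
/- Let p be a prime, s ≥ 1, and let k, k₁, …, kₙ be nonnegative integers with k = k₁ + ⋯ + kₙ. If pˢ divides k and some kⱼ is coprime to p, then pˢ divides the multinomial coefficient k!/(k₁!⋯kₙ!). -/
/-! The multinomial coefficient is a multiple of the binomial coefficient `C(k, kⱼ)`, and
`kⱼ * C(k, kⱼ) = k * C(k - 1, kⱼ - 1)` is divisible by `pˢ`, which is coprime to `kⱼ`. -/

namespace Nat

theorem Coprime.dvd_choose_of_dvd {a n m : ℕ} (ham : Coprime a m) (han : a ∣ n) :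
    a ∣ n.choose m := by
  rcases m with _ | m
  · simp [(coprime_zero_right a).mp ham]
  rcases n with _ | n
  · simp
  refine ham.dvd_of_dvd_mul_right ?_
  rw [← add_one_mul_choose_eq]
  exact han.mul_right _

theorem choose_dvd_multinomial {α : Type*} {s : Finset α} {f : α → ℕ} {a : α} (ha : a ∈ s) :
    (∑ i ∈ s, f i).choose (f a) ∣ multinomial s f := by
  classical
  rw [← Finset.insert_erase ha, multinomial_insert (Finset.notMem_erase a s),
    Finset.sum_insert (Finset.notMem_erase a s)]
  exact dvd_mul_right _ _

end Nat

theorem multinomial_prime_pow_dvd_general (p : ℕ) (s n : ℕ)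
    (f : Fin n → ℕ) (k : ℕ) (hk : k = ∑ i, f i)
    (hdvd : p ^ s ∣ k) (j : Fin n) (hcop : Nat.Coprime (f j) p) :
    p ^ s ∣ Nat.multinomial Finset.univ f := by
  have hchoose : p ^ s ∣ k.choose (f j) := (hcop.symm.pow_left s).dvd_choose_of_dvd hdvd
  exact hchoose.trans (hk ▸ Nat.choose_dvd_multinomial (Finset.mem_univ j))

theorem multinomial_prime_pow_dvd (p : ℕ) (hp : p.Prime) (s n : ℕ) (hs : 1 ≤ s)
    (hn : 1 ≤ n) (f : Fin n → ℕ) (k : ℕ) (hk : k = ∑ i, f i)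
    (hdvd : p ^ s ∣ k) (j : Fin n) (hcop : Nat.Coprime (f j) p) :
    p ^ s ∣ Nat.multinomial Finset.univ f :=
  multinomial_prime_pow_dvd_general p s n f k hk hdvd j hcop
end

section
/- Let n, m ≥ 1 and let l₁,…,lₙ, k₁,…,kₙ, k be nonnegative integers such that k = k₁ + ⋯ + kₙ, k is even, each lᵢ is even, and 2^(m+1) − 2 = l₁k₁ + ⋯ + lₙkₙ. Then 2 divides the multinomial coefficient k!/(k₁!⋯kₙ!). -/
/-!
Halving the weights, `∑ (lᵢ / 2) kᵢ = 2 ^ m - 1` is odd, so some `kᵢ` is odd. Splitting off that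
part, the multinomial coefficient is a multiple of `k.choose kᵢ`, and
`k * (k - 1).choose (kᵢ - 1) = kᵢ * k.choose kᵢ` shows that this binomial coefficient is even
when `k` is even and `kᵢ` is odd.
-/

open Finset

theorem Nat.dvd_choose_of_dvd_of_coprime {p n k : ℕ} (hn : p ∣ n) (hk : p.Coprime k) :
    p ∣ n.choose k := by
  rcases k with _ | k
  · rw [Nat.coprime_zero_right] at hk; simp [hk]
  rcases n with _ | n
  · simp
  have hmul : p ∣ (n + 1).choose (k + 1) * (k + 1) :=
    Nat.add_one_mul_choose_eq n k ▸ hn.mul_right _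
  exact hk.dvd_of_dvd_mul_right hmul

theorem Nat.choose_sum_dvd_multinomial {α : Type*} {s : Finset α} {a : α} (f : α → ℕ)
    (ha : a ∈ s) : (∑ i ∈ s, f i).choose (f a) ∣ Nat.multinomial s f := by
  classical
  have h := Nat.multinomial_insert (s.notMem_erase a) f
  rw [insert_erase ha, add_sum_erase s f ha] at h
  exact Dvd.intro _ h.symm

theorem exists_odd_of_not_four_dvd_sum {ι : Type*} (s : Finset ι) {l f : ι → ℕ}
    (hl : ∀ i ∈ s, 2 ∣ l i) (h : ¬ 4 ∣ ∑ i ∈ s, l i * f i) : ∃ i ∈ s, Odd (f i) := by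
  contrapose! h
  exact dvd_sum fun i hi => mul_dvd_mul (hl i hi) (Nat.not_odd_iff_even.mp (h i hi)).two_dvd

theorem Nat.not_four_dvd_two_pow_succ_sub_two {m : ℕ} (hm : 0 < m) : ¬ 4 ∣ 2 ^ (m + 1) - 2 := by
  obtain ⟨j, rfl⟩ := Nat.exists_eq_add_of_lt hm
  have hpow : 2 ^ (0 + j + 1 + 1) = 4 * 2 ^ j := by ring
  have hpos : 0 < 2 ^ j := by positivity
  omega

theorem two_dvd_multinomial_general (n m : ℕ) (hm : 1 ≤ m)
    (l f : Fin n → ℕ) (k : ℕ) (hk : k = ∑ i, f i)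
    (hke : 2 ∣ k) (hle : ∀ i, 2 ∣ l i)
    (hsum : 2 ^ (m + 1) - 2 = ∑ i, l i * f i) :
    2 ∣ Nat.multinomial Finset.univ f := by
  obtain ⟨i, -, hi⟩ := exists_odd_of_not_four_dvd_sum univ (fun i _ => hle i)
    (hsum ▸ Nat.not_four_dvd_two_pow_succ_sub_two hm)
  have hchoose : 2 ∣ k.choose (f i) :=
    Nat.dvd_choose_of_dvd_of_coprime hke (Nat.coprime_two_left.mpr hi)
  exact hchoose.trans (hk ▸ Nat.choose_sum_dvd_multinomial f (mem_univ i))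

theorem two_dvd_multinomial (n m : ℕ) (hn : 1 ≤ n) (hm : 1 ≤ m)
    (l f : Fin n → ℕ) (k : ℕ) (hk : k = ∑ i, f i)
    (hke : 2 ∣ k) (hle : ∀ i, 2 ∣ l i)
    (hsum : 2 ^ (m + 1) - 2 = ∑ i, l i * f i) :
    2 ∣ Nat.multinomial Finset.univ f :=
  two_dvd_multinomial_general n m hm l f k hk hke hle hsum
end

section
/- The map A ↦ Φ(A), sending a subset A ⊆ ℕ to the subnearring of (ℤ[x], +, ∘) generated by {x^(2^(i+1)−2) : i ∈ A}, satisfies Φ(A) ⊆ Φ(B) if and only if A ⊆ B. In particular Φ is injective, and hence (ℤ[x], +, ∘) has exactly 2^ℵ₀ subnearrings. -/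
open Polynomial

/-- Membership in the subnearring of `(ℤ[x], +, ∘)` generated by `S`:
the smallest subset of `ℤ[x]` containing `S` that is an additive subgroup
and is closed under composition of polynomials. -/
inductive NRGen (S : Set (Polynomial ℤ)) : Polynomial ℤ → Prop
  | mem {p : Polynomial ℤ} : p ∈ S → NRGen S p
  | zero : NRGen S 0
  | add {p q : Polynomial ℤ} : NRGen S p → NRGen S q → NRGen S (p + q)
  | neg {p : Polynomial ℤ} : NRGen S p → NRGen S (-p)
  | comp {p q : Polynomial ℤ} : NRGen S p → NRGen S q → NRGen S (p.comp q)

/-- A subnearring of `(ℤ[x], +, ∘)`. -/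
def IsSubNRPoly (T : Set (Polynomial ℤ)) : Prop :=
  (0 : Polynomial ℤ) ∈ T ∧ (∀ p ∈ T, ∀ q ∈ T, p + q ∈ T) ∧ (∀ p ∈ T, -p ∈ T) ∧
    (∀ p ∈ T, ∀ q ∈ T, p.comp q ∈ T)

noncomputable def Phi (A : Set ℕ+) : Set (Polynomial ℤ) :=
  {p | NRGen {q : Polynomial ℤ | ∃ i ∈ A, q = X ^ (2 ^ ((i : ℕ) + 1) - 2)} p}

/-!
Reduce mod 2. For `i ∉ B`, the integer polynomials whose reduction mod 2 is a polynomial in `X²`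
without an `X ^ (2 ^ (i + 1) - 2)` term form a subnearring. Closure under `+` and `-` is clear;
for composition, in characteristic 2 we have `f(X²) ∘ g(X²) = f(g(X²)²) = (f ∘ g')(X⁴)` (with `g'`
the Frobenius twist of `g`), which has no term of degree `2 ^ (i + 1) - 2 ≡ 2 (mod 4)`. This
subnearring contains the generators of `Φ(B)`, hence `Φ(B)`, but not `X ^ (2 ^ (i + 1) - 2)`.
The count follows since `Φ` injects `Set ℕ+` into the subnearrings, which lie in `Set ℤ[X]`.
-/

namespace NRGen

theorem isSubNRPoly (S : Set ℤ[X]) : IsSubNRPoly {p | NRGen S p} :=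
  ⟨zero, fun _ hp _ hq => add hp hq, fun _ hp => neg hp, fun _ hp _ hq => comp hp hq⟩

theorem subset_of_isSubNRPoly {S T : Set ℤ[X]} (hT : IsSubNRPoly T) (hST : S ⊆ T) :
    {p | NRGen S p} ⊆ T := by
  obtain ⟨h0, hadd, hneg, hcomp⟩ := hT
  intro p hp
  induction hp with
  | mem h => exact hST h
  | zero => exact h0
  | add _ _ ihp ihq => exact hadd _ ihp _ ihq
  | neg _ ih => exact hneg _ ih
  | comp _ _ ihp ihq => exact hcomp _ ihp _ ihq

end NRGen

theorem Polynomial.comp_expand {R : Type*} [CommSemiring R] (p : ℕ) (f g : R[X]) :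
    f.comp (expand R p g) = expand R p (f.comp g) := by
  simp only [expand_eq_comp_X_pow, comp_assoc]

theorem Polynomial.expand_comp_expand {R : Type*} [CommSemiring R] (p : ℕ) [ExpChar R p]
    (f g : R[X]) :
    (expand R p f).comp (expand R p g) = expand R (p * p) (f.comp (g.map (frobenius R p))) := by
  rw [expand_eq_comp_X_pow, comp_assoc, X_pow_comp, ← map_frobenius_expand, map_expand,
    map_expand, ← expand_mul, comp_expand]

def evenAvoiding (n : ℕ) : Set ℤ[X] :=
  {p | p.map (Int.castRingHom (ZMod 2)) ∈ (expand (ZMod 2) 2).range ∧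
    (p.map (Int.castRingHom (ZMod 2))).coeff n = 0}

theorem isSubNRPoly_evenAvoiding {n : ℕ} (hn : n % 4 = 2) : IsSubNRPoly (evenAvoiding n) := by
  refine ⟨⟨?_, ?_⟩, ?_, ?_, ?_⟩
  · rw [Polynomial.map_zero]; exact zero_mem _
  · rw [Polynomial.map_zero, coeff_zero]
  · rintro p ⟨hp, hpn⟩ q ⟨hq, hqn⟩
    refine ⟨?_, ?_⟩
    · rw [Polynomial.map_add]; exact add_mem hp hq
    · rw [Polynomial.map_add, coeff_add, hpn, hqn, add_zero]
  · rintro p ⟨hp, hpn⟩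
    refine ⟨?_, ?_⟩
    · rw [Polynomial.map_neg]; exact neg_mem hp
    · rw [Polynomial.map_neg, coeff_neg, hpn, neg_zero]
  · rintro p ⟨⟨f, hf⟩, -⟩ q ⟨⟨g, hg⟩, -⟩
    have : (p.comp q).map (Int.castRingHom (ZMod 2)) =
        expand (ZMod 2) 4 (f.comp (g.map (frobenius (ZMod 2) 2))) := by
      rw [Polynomial.map_comp, ← hf, ← hg]
      exact expand_comp_expand 2 f g
    refine ⟨this ▸ ⟨_, (expand_mul 2 2 _).symm⟩, ?_⟩
    rw [this, coeff_expand (by norm_num), if_neg (by omega)]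

theorem X_pow_mem_evenAvoiding {m n : ℕ} (hm : Even m) (hmn : m ≠ n) :
    (X : ℤ[X]) ^ m ∈ evenAvoiding n := by
  obtain ⟨k, rfl⟩ := hm
  refine ⟨⟨X ^ k, ?_⟩, ?_⟩
  · simp [pow_mul, ← two_mul]
  · simp [coeff_X_pow, hmn.symm]

theorem X_pow_notMem_evenAvoiding (n : ℕ) : (X : ℤ[X]) ^ n ∉ evenAvoiding n := fun h => by
  simpa using h.2

theorem two_pow_succ_sub_two_mod_four {i : ℕ} (hi : 0 < i) : (2 ^ (i + 1) - 2) % 4 = 2 := by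
  obtain ⟨k, rfl⟩ : ∃ k, i = k + 1 := ⟨i - 1, by omega⟩
  have : 1 ≤ 2 ^ k := Nat.one_le_two_pow
  rw [pow_add]
  omega

theorem even_two_pow_succ_sub_two (i : ℕ) : Even (2 ^ (i + 1) - 2) := by
  rw [pow_succ]
  exact ⟨2 ^ i - 1, by have : 1 ≤ 2 ^ i := Nat.one_le_two_pow; omega⟩

theorem two_pow_succ_sub_two_injective : Function.Injective fun i : ℕ => 2 ^ (i + 1) - 2 := by
  intro i j (h : 2 ^ (i + 1) - 2 = 2 ^ (j + 1) - 2)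
  have hi : 2 ≤ 2 ^ (i + 1) := Nat.le_self_pow (by omega) 2
  have hj : 2 ≤ 2 ^ (j + 1) := Nat.le_self_pow (by omega) 2
  have := Nat.pow_right_injective le_rfl (show 2 ^ (i + 1) = 2 ^ (j + 1) by omega)
  omega

theorem isSubNRPoly_Phi (A : Set ℕ+) : IsSubNRPoly (Phi A) :=
  NRGen.isSubNRPoly _

theorem X_pow_mem_Phi {A : Set ℕ+} {i : ℕ+} (hi : i ∈ A) :
    (X : ℤ[X]) ^ (2 ^ ((i : ℕ) + 1) - 2) ∈ Phi A :=
  NRGen.mem ⟨i, hi, rfl⟩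

theorem Phi_subset_evenAvoiding {B : Set ℕ+} {i : ℕ+} (hi : i ∉ B) :
    Phi B ⊆ evenAvoiding (2 ^ ((i : ℕ) + 1) - 2) := by
  refine NRGen.subset_of_isSubNRPoly
    (isSubNRPoly_evenAvoiding (two_pow_succ_sub_two_mod_four i.pos)) ?_
  rintro _ ⟨j, hj, rfl⟩
  refine X_pow_mem_evenAvoiding (even_two_pow_succ_sub_two j) fun h => hi ?_
  rwa [← PNat.coe_injective (two_pow_succ_sub_two_injective h)]

theorem Phi_subset_Phi_iff (A B : Set ℕ+) : Phi A ⊆ Phi B ↔ A ⊆ B := by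
  refine ⟨fun h i hiA => ?_, fun h => ?_⟩
  · by_contra hiB
    exact X_pow_notMem_evenAvoiding _ (Phi_subset_evenAvoiding hiB (h (X_pow_mem_Phi hiA)))
  · refine NRGen.subset_of_isSubNRPoly (isSubNRPoly_Phi B) ?_
    rintro _ ⟨i, hi, rfl⟩
    exact X_pow_mem_Phi (h hi)

theorem Phi_injective : Function.Injective Phi := fun A B h =>
  ((Phi_subset_Phi_iff A B).1 h.le).antisymm ((Phi_subset_Phi_iff B A).1 h.ge)

theorem phi_subset_iff_and_card :
    (∀ A B : Set ℕ+, Phi A ⊆ Phi B ↔ A ⊆ B) ∧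
    Function.Injective Phi ∧
    Cardinal.mk {T : Set (Polynomial ℤ) // IsSubNRPoly T} = 2 ^ Cardinal.aleph0 := by
  refine ⟨Phi_subset_Phi_iff, Phi_injective, le_antisymm ?_ ?_⟩
  · calc Cardinal.mk {T : Set ℤ[X] // IsSubNRPoly T}
        ≤ Cardinal.mk (Set ℤ[X]) := Cardinal.mk_subtype_le _
      _ = 2 ^ Cardinal.aleph0 := by
        rw [Cardinal.mk_set, Polynomial.cardinalMk_eq_max, Cardinal.mk_eq_aleph0 ℤ, max_self]
  · calc (2 : Cardinal) ^ Cardinal.aleph0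
        = Cardinal.mk (Set ℕ+) := by rw [Cardinal.mk_set, Cardinal.mk_eq_aleph0]
      _ ≤ Cardinal.mk {T : Set ℤ[X] // IsSubNRPoly T} :=
        Cardinal.mk_le_of_injective (f := fun A => ⟨Phi A, isSubNRPoly_Phi A⟩)
          fun A B h => Phi_injective (congrArg Subtype.val h)
end

section
/- The nearring (ℤ[x], +, ∘) contains an infinite strictly descending chain of finitely generated subnearrings: with Nᵢ the subnearring generated by {x^(2^(2^i))}, one has N_{i+1} ⊊ Nᵢ for all i ∈ ℕ. -/
/-!
`X ^ (m * m) = X ^ m ∘ X ^ m`, so the subnearring generated by `X ^ (m * m)` lies in the one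
generated by `X ^ m`. Conversely every element of the subnearring generated by `X ^ n` is
divisible by `X ^ n`, a property preserved by sums, negation and composition; since `X ^ m` is
not divisible by `X ^ (m * m)` for `m > 1`, the inclusion is strict.
-/

open Polynomial

namespace NRGen

theorem of_forall_mem {S T : Set ℤ[X]} (hST : ∀ p ∈ S, NRGen T p) {p : ℤ[X]}
    (hp : NRGen S p) : NRGen T p := by
  induction hp with
  | mem hp => exact hST _ hp
  | zero => exact .zero
  | add _ _ ih₁ ih₂ => exact .add ih₁ ih₂
  | neg _ ih => exact .neg ih
  | comp _ _ ih₁ ih₂ => exact .comp ih₁ ih₂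

theorem X_pow_dvd {n : ℕ} (hn : n ≠ 0) {p : ℤ[X]} (hp : NRGen {X ^ n} p) : X ^ n ∣ p := by
  induction hp with
  | mem hp => rw [Set.mem_singleton_iff.mp hp]
  | zero => exact dvd_zero _
  | add _ _ ih₁ ih₂ => exact dvd_add ih₁ ih₂
  | neg _ ih => exact ih.neg_right
  | comp _ _ ih₁ ih₂ =>
    obtain ⟨r, rfl⟩ := ih₁
    rw [mul_comp, X_pow_comp]
    exact (pow_dvd_pow_of_dvd ((dvd_pow_self X hn).trans ih₂) n).mul_right _

theorem setOf_X_pow_mul_self_ssubset {m : ℕ} (hm : 1 < m) :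
    {p | NRGen {X ^ (m * m)} p} ⊂ {p | NRGen {X ^ m} p} := by
  refine ⟨fun p hp ↦ of_forall_mem ?_ hp, fun hsub ↦ ?_⟩
  · rintro _ rfl
    have hcomp : (X : ℤ[X]) ^ (m * m) = (X ^ m).comp (X ^ m) := by rw [X_pow_comp, pow_mul']
    exact hcomp ▸ .comp (.mem rfl) (.mem rfl)
  · have hdvd : (X : ℤ[X]) ^ (m * m) ∣ X ^ m := X_pow_dvd (by positivity) (hsub (.mem rfl))
    rw [pow_dvd_pow_iff X_ne_zero not_isUnit_X] at hdvd
    exact absurd (Nat.lt_mul_self_iff.mpr hm) hdvd.not_gt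

end NRGen

theorem descending_chain (i : ℕ) :
    {p | NRGen {X ^ (2 ^ (2 ^ (i + 1))) } p} ⊂
      {p : Polynomial ℤ | NRGen {X ^ (2 ^ (2 ^ i))} p} := by
  have hsquare : 2 ^ 2 ^ (i + 1) = 2 ^ 2 ^ i * 2 ^ 2 ^ i := by
    rw [← pow_add, ← two_mul, pow_succ']
  rw [hsquare]
  exact NRGen.setOf_X_pow_mul_self_ssubset (Nat.one_lt_two_pow (by positivity))
end

section
/- Let N be a (right) nearring, let F and M be nonempty subsets of N such that F ⊆ M, M is contained in the subnearring generated by F, M is closed under + and −, and f ∘ m ∈ M for all f ∈ F and m ∈ M. Then M equals the subnearring generated by F. -/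
/-- `T` is a subnearring of the (right) nearring `(N, +, mul)`. -/
def IsSubNR {N : Type*} [AddGroup N] (mul : N → N → N) (T : Set N) : Prop :=
  (0 : N) ∈ T ∧ (∀ a ∈ T, ∀ b ∈ T, a + b ∈ T) ∧ (∀ a ∈ T, -a ∈ T) ∧
    (∀ a ∈ T, ∀ b ∈ T, mul a b ∈ T)

/-- The subnearring generated by `S`: the smallest subset containing `S` that is
an additive subgroup closed under `mul`. -/
def nrGen {N : Type*} [AddGroup N] (mul : N → N → N) (S : Set N) : Set N :=
  ⋂₀ {T | S ⊆ T ∧ IsSubNR mul T}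

/-! The left idealizer `{x | x ∘ M ⊆ M}` of the additive subgroup `M` is a subnearring (by
associativity and right distributivity) and contains `F`, hence contains `⟨F⟩ ⊇ M`. So
`M ∘ M ⊆ M`, making `M` a subnearring containing `F`, and therefore `M ⊇ ⟨F⟩`. -/

section Nearring

variable {N : Type*} [AddGroup N] (mul : N → N → N)

theorem nrGen_subset {S T : Set N} (hST : S ⊆ T) (hT : IsSubNR mul T) : nrGen mul S ⊆ T :=
  Set.sInter_subset_of_mem ⟨hST, hT⟩

variable {mul}

def mulRightHom (hdist : ∀ a b c : N, mul (a + b) c = mul a c + mul b c) (c : N) : N →+ N :=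
  AddMonoidHom.mk' (fun a => mul a c) fun a b => hdist a b c

theorem AddSubgroup.isSubNR_of_mul_mem {M : AddSubgroup N}
    (hmul : ∀ a ∈ M, ∀ b ∈ M, mul a b ∈ M) : IsSubNR mul M :=
  ⟨M.zero_mem, fun _ ha _ hb => M.add_mem ha hb, fun _ ha => M.neg_mem ha, hmul⟩

theorem AddSubgroup.isSubNR_setOf_mul_mem (M : AddSubgroup N)
    (hassoc : ∀ a b c : N, mul (mul a b) c = mul a (mul b c))
    (hdist : ∀ a b c : N, mul (a + b) c = mul a c + mul b c) :
    IsSubNR mul {x | ∀ m ∈ M, mul x m ∈ M} := by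
  refine ⟨fun m _ => ?_, fun a ha b hb m hm => ?_, fun a ha m hm => ?_,
    fun a ha b hb m hm => ?_⟩
  · change mulRightHom hdist m 0 ∈ M
    rw [map_zero]
    exact M.zero_mem
  · simpa only [hdist] using M.add_mem (ha m hm) (hb m hm)
  · change mulRightHom hdist m (-a) ∈ M
    rw [map_neg]
    exact M.neg_mem (ha m hm)
  · simpa only [hassoc] using ha _ (hb m hm)

end Nearring

theorem gen_eq_of_closed_general {N : Type*} [AddGroup N] (mul : N → N → N)
    (hassoc : ∀ a b c : N, mul (mul a b) c = mul a (mul b c))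
    (hdist : ∀ a b c : N, mul (a + b) c = mul a c + mul b c)
    (F M : Set N) (hM : M.Nonempty)
    (h1 : F ⊆ M)
    (h2 : M ⊆ nrGen mul F)
    (h4 : ∀ a ∈ M, ∀ b ∈ M, a - b ∈ M)
    (h5 : ∀ f ∈ F, ∀ m ∈ M, mul f m ∈ M) :
    M = nrGen mul F := by
  let G : AddSubgroup N :=
    AddSubgroup.ofSub M hM fun a ha b hb => sub_eq_add_neg a b ▸ h4 a ha b hb
  have hmul : ∀ a ∈ M, ∀ b ∈ M, mul a b ∈ M := fun a ha =>
    nrGen_subset mul h5 (G.isSubNR_setOf_mul_mem hassoc hdist) (h2 ha)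
  exact h2.antisymm (nrGen_subset mul h1 (AddSubgroup.isSubNR_of_mul_mem (M := G) hmul))

theorem gen_eq_of_closed {N : Type*} [AddGroup N] (mul : N → N → N)
    (hassoc : ∀ a b c : N, mul (mul a b) c = mul a (mul b c))
    (hdist : ∀ a b c : N, mul (a + b) c = mul a c + mul b c)
    (F M : Set N) (hF : F.Nonempty) (hM : M.Nonempty)
    (h1 : F ⊆ M)
    (h2 : M ⊆ nrGen mul F)
    (h3 : ∀ a ∈ M, ∀ b ∈ M, a + b ∈ M)
    (h4 : ∀ a ∈ M, ∀ b ∈ M, a - b ∈ M)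
    (h5 : ∀ f ∈ F, ∀ m ∈ M, mul f m ∈ M) :
    M = nrGen mul F :=
  gen_eq_of_closed_general mul hassoc hdist F M hM h1 h2 h4 h5
end

section
/- A polynomial p = Σᵢ cᵢxⁱ ∈ ℤ[x] lies in the subnearring of (ℤ[x], +, ∘) generated by {x², x³} if and only if c₀ = 0, c₁ = 0, and 2 divides c₅. -/
open Polynomial

/-!
Polynomials divisible by `X²` with even coefficient of `X⁵` form an additive group closed under
composition: for `p, q ∈ X²ℤ[X]` the coefficient of `X⁵` in `p ∘ q = ∑ pᵢ qⁱ` comes only from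
`p₂ q²`, and the odd coefficients of `q²` are even because `q² ≡ q(X²) mod 2`.

Conversely, modulo terms already generated, `X³ ∘ (X² + Xᵐ)` gives `3 Xᵐ⁺⁴` and
`X² ∘ (X³ + Xᵐ⁺¹)` gives `2 Xᵐ⁺⁴`, so `Xᵐ` and `Xᵐ⁺¹` yield `Xᵐ⁺⁴`. Together with `X⁴ = X² ∘ X²`,
`X⁸ = X² ∘ X⁴` and `X⁹ = X³ ∘ X³` this produces every `Xⁿ` with `n ≥ 2`, `n ≠ 5`, while
`X² ∘ (X² + X³) - X⁴ - X⁶ = 2 X⁵`.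
-/

namespace Polynomial

theorem X_pow_dvd_comp {R : Type*} [CommSemiring R] {p q : R[X]} {n : ℕ}
    (hp : X ^ n ∣ p) (hq : X ∣ q) : X ^ n ∣ p.comp q := by
  obtain ⟨r, rfl⟩ := hp
  rw [mul_comp, X_pow_comp]
  exact dvd_mul_of_dvd_left (pow_dvd_pow_of_dvd hq n) _

theorem coeff_pow_eq_zero_of_X_pow_dvd {R : Type*} [CommSemiring R] {q : R[X]} {k i n : ℕ}
    (hq : X ^ k ∣ q) (hn : n < k * i) : (q ^ i).coeff n = 0 := by
  have : X ^ (k * i) ∣ q ^ i := by rw [pow_mul]; exact pow_dvd_pow_of_dvd hq i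
  exact X_pow_dvd_iff.mp this n hn

theorem prime_dvd_coeff_pow_of_not_dvd {p : ℕ} [Fact p.Prime] (q : ℤ[X]) {n : ℕ} (hn : ¬ p ∣ n) :
    (p : ℤ) ∣ (q ^ p).coeff n := by
  rw [← ZMod.intCast_zmod_eq_zero_iff_dvd, ← eq_intCast (Int.castRingHom (ZMod p)),
    ← coeff_map, Polynomial.map_pow, ← ZMod.expand_card,
    coeff_expand (Fact.out : p.Prime).pos, if_neg hn]

theorem two_dvd_coeff_five_comp {p q : ℤ[X]} (hp : X ^ 2 ∣ p) (hq : X ^ 2 ∣ q) :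
    2 ∣ (p.comp q).coeff 5 := by
  rw [comp_eq_sum_left, Polynomial.sum, finsetSum_coeff]
  refine Finset.dvd_sum fun i _ => ?_
  rw [coeff_C_mul]
  rcases (by omega : i < 2 ∨ i = 2 ∨ 3 ≤ i) with hi | rfl | hi
  · simp [X_pow_dvd_iff.mp hp i hi]
  · exact dvd_mul_of_dvd_right (prime_dvd_coeff_pow_of_not_dvd (p := 2) q (by decide)) _
  · simp [coeff_pow_eq_zero_of_X_pow_dvd hq (by omega : 5 < 2 * i)]

end Polynomial

def nearClosure (S : Set ℤ[X]) : AddSubgroup ℤ[X] where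
  carrier := {p | NRGen S p}
  zero_mem' := NRGen.zero
  add_mem' := NRGen.add
  neg_mem' := NRGen.neg

namespace nearClosure

variable {S : Set ℤ[X]}

theorem comp_mem {p q : ℤ[X]} (hp : p ∈ nearClosure S) (hq : q ∈ nearClosure S) :
    p.comp q ∈ nearClosure S :=
  NRGen.comp hp hq

theorem le_of_comp_mem {M : AddSubgroup ℤ[X]} (hS : S ⊆ M)
    (hM : ∀ p ∈ M, ∀ q ∈ M, p.comp q ∈ M) : nearClosure S ≤ M := by
  intro p hp
  induction hp with
  | mem h => exact hS h
  | zero => exact M.zero_mem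
  | add _ _ hp hq => exact M.add_mem hp hq
  | neg _ hp => exact M.neg_mem hp
  | comp _ _ hp hq => exact hM _ hp _ hq

theorem X_pow_mul_mem {a b : ℕ} (ha : X ^ a ∈ nearClosure S) (hb : X ^ b ∈ nearClosure S) :
    X ^ (a * b) ∈ nearClosure S := by
  simpa [X_pow_comp, ← pow_mul] using comp_mem hb ha

theorem two_smul_X_pow_add_mem (h2 : X ^ 2 ∈ nearClosure S) {a b : ℕ}
    (ha : X ^ a ∈ nearClosure S) (hb : X ^ b ∈ nearClosure S) :
    (2 : ℤ) • X ^ (a + b) ∈ nearClosure S := by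
  have h := sub_mem (comp_mem h2 (add_mem ha hb)) (add_mem (comp_mem h2 ha) (comp_mem h2 hb))
  convert h using 1
  simp only [X_pow_comp]
  ring

theorem X_pow_add_four_mem (h2 : X ^ 2 ∈ nearClosure S) (h3 : X ^ 3 ∈ nearClosure S) {m : ℕ}
    (hm : X ^ m ∈ nearClosure S) (hm' : X ^ (m + 1) ∈ nearClosure S) :
    X ^ (m + 4) ∈ nearClosure S := by
  have three : (3 : ℤ) • X ^ (m + 4) ∈ nearClosure S := by
    have h := sub_mem (sub_mem (comp_mem h3 (add_mem h2 hm))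
      (add_mem (comp_mem h3 h2) (comp_mem h3 hm))) (zsmul_mem (X_pow_mul_mem h2 hm') 3)
    convert h using 1
    simp only [X_pow_comp]
    ring
  have two : (2 : ℤ) • X ^ (m + 4) ∈ nearClosure S := by
    rw [show m + 4 = 3 + (m + 1) by ring]
    exact two_smul_X_pow_add_mem h2 h3 hm'
  have h := sub_mem three two
  rwa [← sub_smul, show (3 : ℤ) - 2 = 1 by norm_num, one_smul] at h

theorem X_pow_mem (h2 : X ^ 2 ∈ nearClosure S) (h3 : X ^ 3 ∈ nearClosure S) :
    ∀ n, 2 ≤ n → n ≠ 5 → X ^ n ∈ nearClosure S := by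
  intro n
  induction n using Nat.strong_induction_on with
  | _ n ih =>
    intro hn hn5
    have h4 : X ^ 4 ∈ nearClosure S := X_pow_mul_mem h2 h2
    rcases (by omega : n ≤ 4 ∨ n = 8 ∨ n = 9 ∨ 6 ≤ n ∧ n ≠ 8 ∧ n ≠ 9) with
      hn4 | rfl | rfl | ⟨hn6, hn8, hn9⟩
    · interval_cases n
      exacts [h2, h3, h4]
    · exact X_pow_mul_mem h2 h4
    · exact X_pow_mul_mem h3 h3
    · obtain ⟨m, rfl⟩ : ∃ m, n = m + 4 := ⟨n - 4, by omega⟩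
      exact X_pow_add_four_mem h2 h3 (ih m (by omega) (by omega) (by omega))
        (ih (m + 1) (by omega) (by omega) (by omega))

end nearClosure

def quinticEven : AddSubgroup ℤ[X] where
  carrier := {p | X ^ 2 ∣ p ∧ 2 ∣ p.coeff 5}
  zero_mem' := ⟨dvd_zero _, by simp⟩
  add_mem' := fun ⟨hp, hp5⟩ ⟨hq, hq5⟩ => ⟨dvd_add hp hq, by simpa using dvd_add hp5 hq5⟩
  neg_mem' := fun ⟨hp, hp5⟩ => ⟨(dvd_neg).2 hp, by simpa using hp5⟩

theorem mem_quinticEven_iff {p : ℤ[X]} :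
    p ∈ quinticEven ↔ p.coeff 0 = 0 ∧ p.coeff 1 = 0 ∧ 2 ∣ p.coeff 5 := by
  simp [quinticEven, X_pow_dvd_iff, Nat.le_one_iff_eq_zero_or_eq_one, or_imp, forall_and,
    and_assoc]

theorem quinticEven.comp_mem {p q : ℤ[X]} (hp : p ∈ quinticEven) (hq : q ∈ quinticEven) :
    p.comp q ∈ quinticEven :=
  ⟨X_pow_dvd_comp hp.1 (dvd_trans (dvd_pow_self X two_ne_zero) hq.1),
    two_dvd_coeff_five_comp hp.1 hq.1⟩

theorem quinticEven_le_nearClosure {S : Set ℤ[X]} (h2 : X ^ 2 ∈ nearClosure S)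
    (h3 : X ^ 3 ∈ nearClosure S) : quinticEven ≤ nearClosure S := by
  rintro p ⟨hp, hp5⟩
  rw [p.as_sum_support_C_mul_X_pow]
  refine sum_mem fun i _ => ?_
  rw [← smul_eq_C_mul]
  rcases (by omega : i < 2 ∨ i = 5 ∨ 2 ≤ i ∧ i ≠ 5) with hi | rfl | ⟨hi2, hi5⟩
  · simp [X_pow_dvd_iff.mp hp i hi]
  · obtain ⟨k, hk⟩ := hp5
    rw [hk, mul_comm, mul_smul]
    exact zsmul_mem (nearClosure.two_smul_X_pow_add_mem h2 h2 h3) k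
  · exact zsmul_mem (nearClosure.X_pow_mem h2 h3 i hi2 hi5) _

theorem nearClosure_X_sq_X_cube : nearClosure {X ^ 2, X ^ 3} = quinticEven := by
  have h2 : X ^ 2 ∈ nearClosure {X ^ 2, X ^ 3} := NRGen.mem (Or.inl rfl)
  have h3 : X ^ 3 ∈ nearClosure {X ^ 2, X ^ 3} := NRGen.mem (Or.inr rfl)
  refine le_antisymm (nearClosure.le_of_comp_mem ?_ fun _ hp _ hq => quinticEven.comp_mem hp hq)
    (quinticEven_le_nearClosure h2 h3)
  rintro p (rfl | rfl) <;> simp [mem_quinticEven_iff, coeff_X_pow]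

theorem mem_gen_x2_x3 (p : Polynomial ℤ) :
    NRGen {X ^ 2, X ^ 3} p ↔ p.coeff 0 = 0 ∧ p.coeff 1 = 0 ∧ 2 ∣ p.coeff 5 := by
  rw [← mem_quinticEven_iff, ← nearClosure_X_sq_X_cube]
  rfl
end

section
/- A polynomial p = Σᵢ cᵢxⁱ ∈ ℤ[x] lies in the subnearring of (ℤ[x], +, ∘) generated by {x, x², x³} if and only if c₀ = 0. -/
/-!
Constant terms of `p + q`, `-p` and `p ∘ q` vanish when those of `p` and `q` do, which gives one
direction. Conversely, a subnearring containing every `X ^ n` with `n ≥ 1` contains every `p` with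
`p.coeff 0 = 0`, being an additive subgroup. The powers are built by strong induction:
`X ^ (2 * m) = X ^ m ∘ X ^ 2`, and for `m ≥ 2` the expansions of `(X ^ m + X) ^ 3` and
`(X ^ (2 * m) + X) ^ 2` give `3 X ^ (2 * m + 1)` and `2 X ^ (2 * m + 1)` modulo smaller powers
(and `X ^ (3 * m)`, `X ^ (4 * m)`, again compositions), whose difference is `X ^ (2 * m + 1)`.
-/

open Polynomial

namespace NRGen

variable {S : Set ℤ[X]} {p : ℤ[X]}

def addSubgroup (S : Set ℤ[X]) : AddSubgroup ℤ[X] where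
  carrier := {p | NRGen S p}
  zero_mem' := zero
  add_mem' := add
  neg_mem' := neg

theorem mem_addSubgroup : p ∈ addSubgroup S ↔ NRGen S p := Iff.rfl

theorem sub {q : ℤ[X]} (hp : NRGen S p) (hq : NRGen S q) : NRGen S (p - q) :=
  sub_mem (H := addSubgroup S) hp hq

theorem zsmul (hp : NRGen S p) (n : ℤ) : NRGen S (n • p) :=
  zsmul_mem (K := addSubgroup S) hp n

theorem coeff_zero_eq_zero (hS : ∀ q ∈ S, q.coeff 0 = 0) (hp : NRGen S p) : p.coeff 0 = 0 := by
  induction hp with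
  | mem hq => exact hS _ hq
  | zero => exact coeff_zero 0
  | add _ _ hp hq => rw [coeff_add, hp, hq, add_zero]
  | neg _ hp => rw [coeff_neg, hp, neg_zero]
  | comp _ _ hp hq =>
    rw [coeff_zero_eq_eval_zero, eval_comp, ← coeff_zero_eq_eval_zero, hq,
      ← coeff_zero_eq_eval_zero, hp]

theorem of_coeff_zero_eq_zero (hS : ∀ n, 1 ≤ n → NRGen S (X ^ n)) (hp : p.coeff 0 = 0) :
    NRGen S p := by
  rw [← mem_addSubgroup, as_sum_support_C_mul_X_pow p]
  refine sum_mem fun n _ => ?_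
  rcases Nat.eq_zero_or_pos n with rfl | hn
  · rw [hp, C_0, zero_mul]
    exact zero_mem _
  · rw [← smul_eq_C_mul]
    exact (hS n hn).zsmul _

theorem X_pow_mul {m n : ℕ} (hm : NRGen S (X ^ m)) (hn : NRGen S (X ^ n)) :
    NRGen S (X ^ (m * n)) := by
  simpa only [X_pow_comp, ← pow_mul] using hn.comp hm

theorem X_pow_two_mul_add_one {m : ℕ} (hX : NRGen S X) (h2 : NRGen S (X ^ 2))
    (h3 : NRGen S (X ^ 3)) (hm : NRGen S (X ^ m)) (hm2 : NRGen S (X ^ (m + 2))) :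
    NRGen S (X ^ (2 * m + 1)) := by
  have h2m : NRGen S (X ^ (m * 2)) := hm.X_pow_mul h2
  have cube : NRGen S ((X ^ m + X) ^ 3 - X ^ (m * 3) - (3 : ℤ) • X ^ (m + 2) - X ^ 3) := by
    rw [← X_pow_comp]
    exact (((h3.comp (hm.add hX)).sub (hm.X_pow_mul h3)).sub (hm2.zsmul 3)).sub h3
  have square : NRGen S ((X ^ (m * 2) + X) ^ 2 - X ^ (m * 2 * 2) - X ^ 2) := by
    rw [← X_pow_comp]
    exact ((h2.comp (h2m.add hX)).sub (h2m.X_pow_mul h2)).sub h2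
  convert cube.sub square using 1
  ring

theorem X_pow (hX : NRGen S X) (h2 : NRGen S (X ^ 2)) (h3 : NRGen S (X ^ 3)) :
    ∀ n, 1 ≤ n → NRGen S (X ^ n) := by
  intro n hn
  induction n using Nat.strong_induction_on with
  | _ n ih =>
  rcases Nat.even_or_odd' n with ⟨m, rfl | rfl⟩
  · rw [mul_comm]
    exact (ih m (by omega) (by omega)).X_pow_mul h2
  · rcases Nat.lt_or_ge m 2 with hm | hm
    · interval_cases m
      · simpa using hX
      · exact h3
    · exact X_pow_two_mul_add_one hX h2 h3 (ih m (by omega) (by omega))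
        (ih (m + 2) (by omega) (by omega))

end NRGen

theorem mem_gen_x_x2_x3 (p : Polynomial ℤ) :
    NRGen {X, X ^ 2, X ^ 3} p ↔ p.coeff 0 = 0 := by
  refine ⟨NRGen.coeff_zero_eq_zero ?_, NRGen.of_coeff_zero_eq_zero ?_⟩
  · rintro q (rfl | rfl | rfl) <;> simp
  · exact NRGen.X_pow (.mem (by simp)) (.mem (by simp)) (.mem (by simp))
end

section
/- A polynomial p = Σᵢ cᵢxⁱ ∈ ℤ[x] lies in the subnearring of (ℤ[x], +, ∘) generated by {x²} if and only if c₀ = 0, all odd-indexed coefficients vanish, and for every i ≥ 1, 2^(s₂(i)−1) divides c_{2i}, where s₂(i) is the binary digit sum of i. -/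
/-!
Let `Q ⊆ ℤ[y]` be the additive group of `g = ∑ gₖ yᵏ` with `g₀ = 0` and `2 ^ (s₂(k) - 1) ∣ gₖ`;
the subnearring generated by `x²` is `{g(x²) | g ∈ Q}`.

In an additive subgroup `S` of a commutative ring that is closed under squaring, polarization
`2ab = (a + b)² - a² - b²` puts `2ab` in `S`, and induction along the binary expansion of `m`
then gives `2 ^ (s₂(m) - 1) aᵐ ∈ S` for `a ∈ S`; hence `g(r) ∈ S` for `g ∈ Q` and `r ∈ S`.
With `S` the subnearring and `r = x²` this is one inclusion. For the other, `{g(x²) | g ∈ Q}`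
contains `x²` and is closed under composition, as `g(x²) ∘ q = g(q²)`, once it is closed under
squaring. That holds because `Q` is: `2 gᵢ hⱼ y^(i+j) ∈ Q` by `s₂(i + j) ≤ s₂(i) + s₂(j)`, and
the square of a sum is the sum of the squares plus doubled products.
-/

open Polynomial

def s₂ (n : ℕ) : ℕ := (Nat.digits 2 n).sum

theorem s₂_two_mul (n : ℕ) : s₂ (2 * n) = s₂ n := by
  rcases eq_or_ne n 0 with rfl | hn
  · rfl
  · rw [s₂, ← zero_add (2 * n), Nat.digits_add 2 one_lt_two 0 n two_pos (.inr hn),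
      List.sum_cons, zero_add, s₂]

theorem s₂_two_mul_add_one (n : ℕ) : s₂ (2 * n + 1) = s₂ n + 1 := by
  rw [s₂, add_comm, Nat.digits_add 2 one_lt_two 1 n one_lt_two (.inl one_ne_zero),
    List.sum_cons, add_comm, s₂]

theorem padicValNat_two_factorial_add_s₂ (n : ℕ) : padicValNat 2 n.factorial + s₂ n = n := by
  have h := sub_one_mul_padicValNat_factorial (p := 2) n
  have := Nat.digit_sum_le 2 n
  rw [Nat.add_one_sub_one, one_mul] at h
  unfold s₂
  omega

theorem s₂_pos {n : ℕ} (hn : n ≠ 0) : 0 < s₂ n := by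
  have := padicValNat_factorial_lt_of_ne_zero 2 hn
  have := padicValNat_two_factorial_add_s₂ n
  omega

theorem s₂_add_le (a b : ℕ) : s₂ (a + b) ≤ s₂ a + s₂ b := by
  -- `a! b! ∣ (a + b)!` compared through Legendre's `v₂(n!) = n - s₂(n)`
  have h := congrArg (padicValNat 2) (Nat.add_choose_mul_factorial_mul_factorial a b)
  have hC : (a + b).choose b ≠ 0 := (Nat.choose_pos (Nat.le_add_left b a)).ne'
  rw [padicValNat.mul (mul_ne_zero hC a.factorial_ne_zero) b.factorial_ne_zero,
    padicValNat.mul hC a.factorial_ne_zero] at h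
  have := padicValNat_two_factorial_add_s₂ a
  have := padicValNat_two_factorial_add_s₂ b
  have := padicValNat_two_factorial_add_s₂ (a + b)
  omega

section SquareClosed

variable {A : Type*} [CommRing A] {S : AddSubgroup A}

theorem AddSubgroup.two_nsmul_mul_mem (hsq : ∀ a ∈ S, a ^ 2 ∈ S) {a b : A} (ha : a ∈ S)
    (hb : b ∈ S) : 2 • (a * b) ∈ S := by
  have polarization : 2 • (a * b) = (a + b) ^ 2 - a ^ 2 - b ^ 2 := by ring
  rw [polarization]
  exact sub_mem (sub_mem (hsq _ (add_mem ha hb)) (hsq a ha)) (hsq b hb)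

theorem AddSubgroup.two_pow_s₂_nsmul_pow_mem (hsq : ∀ a ∈ S, a ^ 2 ∈ S) {m : ℕ} (hm : m ≠ 0)
    {a : A} (ha : a ∈ S) : 2 ^ (s₂ m - 1) • a ^ m ∈ S := by
  induction m using Nat.strong_induction_on generalizing a with
  | _ m ih =>
    obtain ⟨n, rfl | rfl⟩ := Nat.even_or_odd' m
    · have hn : n ≠ 0 := by omega
      rw [s₂_two_mul, pow_mul]
      exact ih n (by omega) hn (hsq a ha)
    · rcases eq_or_ne n 0 with rfl | hn
      · simpa [s₂] using ha
      have h : 2 ^ (s₂ (2 * n + 1) - 1) • a ^ (2 * n + 1) =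
          2 • ((2 ^ (s₂ n - 1) • (a ^ 2) ^ n) * a) := by
        rw [s₂_two_mul_add_one, Nat.add_sub_cancel, smul_mul_assoc, smul_smul, ← pow_succ',
          Nat.sub_add_cancel (s₂_pos hn), ← pow_mul, pow_succ]
      rw [h]
      exact two_nsmul_mul_mem hsq (ih n (by omega) hn (hsq a ha)) ha

theorem AddSubgroup.sq_sum_mem (h2 : ∀ a ∈ S, ∀ b ∈ S, 2 • (a * b) ∈ S) {ι : Type*}
    {s : Finset ι} {f : ι → A} (hf : ∀ i ∈ s, f i ∈ S) (hf2 : ∀ i ∈ s, f i ^ 2 ∈ S) :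
    (∑ i ∈ s, f i) ^ 2 ∈ S := by
  classical
  induction s using Finset.induction_on with
  | empty => simp
  | insert i s hi ih =>
    simp only [Finset.mem_insert, forall_eq_or_imp] at hf hf2
    have h : (∑ j ∈ insert i s, f j) ^ 2 =
        f i ^ 2 + 2 • (f i * ∑ j ∈ s, f j) + (∑ j ∈ s, f j) ^ 2 := by
      rw [Finset.sum_insert hi]; ring
    rw [h]
    exact add_mem (add_mem hf2.1 (h2 _ hf.1 _ (sum_mem hf.2))) (ih hf.2 hf2.2)

end SquareClosed

def digitLattice : AddSubgroup ℤ[X] where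
  carrier := {g | g.coeff 0 = 0 ∧ ∀ k, (2 : ℤ) ^ (s₂ k - 1) ∣ g.coeff k}
  zero_mem' := by simp
  add_mem' := fun ⟨ha0, ha⟩ ⟨hb0, hb⟩ =>
    ⟨by simp [ha0, hb0], fun k => by simpa using dvd_add (ha k) (hb k)⟩
  neg_mem' := fun ⟨ha0, ha⟩ => ⟨by simp [ha0], fun k => by simpa using (ha k).neg_right⟩

theorem C_mul_X_pow_mem_digitLattice {c : ℤ} {k : ℕ} (h0 : k = 0 → c = 0)
    (hc : (2 : ℤ) ^ (s₂ k - 1) ∣ c) : C c * X ^ k ∈ digitLattice := by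
  refine ⟨?_, fun n => ?_⟩ <;> rw [coeff_C_mul_X_pow] <;> split_ifs with h
  · exact h0 h.symm
  · rfl
  · exact h ▸ hc
  · exact dvd_zero _

theorem X_mem_digitLattice : (X : ℤ[X]) ∈ digitLattice := by
  simpa using C_mul_X_pow_mem_digitLattice (c := 1) (k := 1) (by simp) (by simp [s₂])

theorem two_nsmul_mul_mem_digitLattice {a b : ℤ[X]} (ha : a ∈ digitLattice)
    (hb : b ∈ digitLattice) : 2 • (a * b) ∈ digitLattice := by
  refine ⟨by simp [mul_coeff_zero, ha.1], fun n => ?_⟩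
  rw [coeff_smul, coeff_mul, Finset.smul_sum]
  refine Finset.dvd_sum fun ⟨i, j⟩ hij => ?_
  obtain rfl : i + j = n := Finset.HasAntidiagonal.mem_antidiagonal.1 hij
  rcases eq_or_ne i 0 with rfl | hi
  · simp [ha.1]
  rcases eq_or_ne j 0 with rfl | hj
  · simp [hb.1]
  obtain ⟨c, hc⟩ := ha.2 i
  obtain ⟨d, hd⟩ := hb.2 j
  have := s₂_add_le i j
  have := s₂_pos hi
  have := s₂_pos hj
  calc (2 : ℤ) ^ (s₂ (i + j) - 1) ∣ 2 ^ (s₂ i - 1 + (s₂ j - 1) + 1) :=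
        pow_dvd_pow 2 (by omega)
    _ ∣ 2 • (a.coeff i * b.coeff j) := ⟨c * d, by rw [hc, hd, nsmul_eq_mul]; push_cast; ring⟩

theorem sq_mem_digitLattice {g : ℤ[X]} (hg : g ∈ digitLattice) : g ^ 2 ∈ digitLattice := by
  rw [g.as_sum_range_C_mul_X_pow]
  refine AddSubgroup.sq_sum_mem (fun a ha b hb => two_nsmul_mul_mem_digitLattice ha hb)
    (fun k _ => C_mul_X_pow_mem_digitLattice (fun hk => hk ▸ hg.1) (hg.2 k)) fun k _ => ?_
  rw [mul_pow, ← C_pow, ← pow_mul]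
  refine C_mul_X_pow_mem_digitLattice (fun hk => ?_) ?_
  · rw [show k = 0 by omega, hg.1, zero_pow two_ne_zero]
  · rw [mul_comm, s₂_two_mul]
    exact dvd_pow (hg.2 k) two_ne_zero

theorem aeval_mem_of_mem_digitLattice {A : Type*} [CommRing A] {S : AddSubgroup A}
    (hsq : ∀ a ∈ S, a ^ 2 ∈ S) {g : ℤ[X]} (hg : g ∈ digitLattice) {r : A} (hr : r ∈ S) :
    aeval r g ∈ S := by
  rw [aeval_eq_sum_range]
  refine sum_mem fun k _ => ?_
  rcases eq_or_ne k 0 with rfl | hk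
  · simp [hg.1]
  obtain ⟨d, hd⟩ := hg.2 k
  rw [hd, mul_comm, mul_smul, ← Nat.cast_ofNat, ← Nat.cast_pow, natCast_zsmul]
  exact zsmul_mem (AddSubgroup.two_pow_s₂_nsmul_pow_mem hsq hk hr) d

noncomputable def evenDigitLattice : AddSubgroup ℤ[X] :=
  digitLattice.map (expand ℤ 2 : ℤ[X] →+ ℤ[X])

theorem mem_evenDigitLattice {p : ℤ[X]} :
    p ∈ evenDigitLattice ↔ ∃ g ∈ digitLattice, expand ℤ 2 g = p :=
  Iff.rfl

theorem sq_mem_evenDigitLattice {p : ℤ[X]} (hp : p ∈ evenDigitLattice) :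
    p ^ 2 ∈ evenDigitLattice := by
  obtain ⟨g, hg, rfl⟩ := mem_evenDigitLattice.1 hp
  exact mem_evenDigitLattice.2 ⟨g ^ 2, sq_mem_digitLattice hg, map_pow _ g 2⟩

theorem mem_evenDigitLattice_iff (p : ℤ[X]) :
    p ∈ evenDigitLattice ↔ p.coeff 0 = 0 ∧ (∀ i : ℕ, p.coeff (2 * i + 1) = 0) ∧
      ∀ i : ℕ, 1 ≤ i → (2 : ℤ) ^ (s₂ i - 1) ∣ p.coeff (2 * i) := by
  rw [mem_evenDigitLattice]
  constructor
  · rintro ⟨g, ⟨hg0, hg⟩, rfl⟩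
    refine ⟨?_, fun i => ?_, fun i _ => ?_⟩
    · simpa [coeff_expand two_pos] using hg0
    · simp [coeff_expand two_pos]
    · simpa using hg i
  · rintro ⟨h0, hodd, heven⟩
    refine ⟨contract 2 p, ⟨?_, fun k => ?_⟩, ?_⟩
    · simpa [coeff_contract two_ne_zero] using h0
    · rw [coeff_contract two_ne_zero, mul_comm]
      rcases eq_or_ne k 0 with rfl | hk
      · simp [h0]
      · exact heven k (Nat.one_le_iff_ne_zero.2 hk)
    · ext n
      rw [coeff_expand two_pos, coeff_contract two_ne_zero]
      split_ifs with h
      · rw [Nat.div_mul_cancel h]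
      · obtain ⟨i, rfl⟩ : ∃ i, n = 2 * i + 1 := ⟨n / 2, by omega⟩
        exact (hodd i).symm

def NRGen.addSubgroup_s11 (S : Set ℤ[X]) : AddSubgroup ℤ[X] where
  carrier := {p | NRGen S p}
  zero_mem' := .zero
  add_mem' := .add
  neg_mem' := .neg

theorem NRGen.X_sq : NRGen {X ^ 2} (X ^ 2) :=
  .mem (Set.mem_singleton _)

theorem NRGen.sq {p : ℤ[X]} (hp : NRGen {X ^ 2} p) : NRGen {X ^ 2} (p ^ 2) := by
  simpa only [X_pow_comp] using NRGen.comp NRGen.X_sq hp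

theorem nrGen_of_mem_evenDigitLattice {p : ℤ[X]} (hp : p ∈ evenDigitLattice) :
    NRGen {X ^ 2} p := by
  obtain ⟨g, hg, rfl⟩ := mem_evenDigitLattice.1 hp
  exact aeval_mem_of_mem_digitLattice (S := NRGen.addSubgroup_s11 {X ^ 2})
    (fun _ => NRGen.sq) hg NRGen.X_sq

theorem mem_evenDigitLattice_of_nrGen {p : ℤ[X]} (hp : NRGen {X ^ 2} p) :
    p ∈ evenDigitLattice := by
  induction hp with
  | mem h =>
    rw [Set.mem_singleton_iff.1 h]
    exact ⟨X, X_mem_digitLattice, expand_X 2⟩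
  | zero => exact zero_mem _
  | add _ _ hp hq => exact add_mem hp hq
  | neg _ hp => exact neg_mem hp
  | @comp p q _ _ hp hq =>
    obtain ⟨g, hg, rfl⟩ := mem_evenDigitLattice.1 hp
    have h : (expand ℤ 2 g).comp q = g.comp (q ^ 2) := by
      rw [expand_eq_comp_X_pow, comp_assoc, X_pow_comp]
    rw [h]
    exact aeval_mem_of_mem_digitLattice (fun _ => sq_mem_evenDigitLattice) hg
      (sq_mem_evenDigitLattice hq)

theorem nrGen_X_sq_iff_mem_evenDigitLattice (p : ℤ[X]) :
    NRGen {X ^ 2} p ↔ p ∈ evenDigitLattice :=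
  ⟨mem_evenDigitLattice_of_nrGen, nrGen_of_mem_evenDigitLattice⟩

theorem mem_gen_x2 (p : Polynomial ℤ) :
    NRGen {X ^ 2} p ↔
      p.coeff 0 = 0 ∧ (∀ i : ℕ, p.coeff (2 * i + 1) = 0) ∧
        ∀ i : ℕ, 1 ≤ i → (2 : ℤ) ^ ((Nat.digits 2 i).sum - 1) ∣ p.coeff (2 * i) :=
  (nrGen_X_sq_iff_mem_evenDigitLattice p).trans (mem_evenDigitLattice_iff p)
end
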